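/- arXiv:2006.01295 — 6 statements merged into one kernel-verified Lean document; each statement's English description precedes it below -/
import Mathlib

section
/- For every real x ≥ 1, ∫₁ˣ M(x/t) dt = x·m(x) − M(x), where M(u) = Σ_{n≤u} μ(n) and m(u) = Σ_{n≤u} μ(n)/n. -/
/-!
For `1 ≤ t ≤ x`, the integers `n ≤ x / t` are exactly the `n ≤ x` with `t ≤ x / n`, so
`M(x/t) = ∑_{n ≤ x} μ(n) · 1[t ≤ x/n]`. Integrating term by term, `∫₁ˣ 1[t ≤ x/n] dt = x/n - 1`,
and summing gives `x m(x) - M(x)`.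
-/

open Finset MeasureTheory ArithmeticFunction Real

noncomputable def Mf (x : ℝ) : ℝ := ∑ n ∈ Finset.Icc 1 ⌊x⌋₊, (moebius n : ℝ)

noncomputable def mf (x : ℝ) : ℝ := ∑ n ∈ Finset.Icc 1 ⌊x⌋₊, (moebius n : ℝ) / n

lemma intervalIntegrable_indicator_Iic_const (c d a b : ℝ) :
    IntervalIntegrable ({t | t ≤ c}.indicator fun _ => d) volume a b :=
  intervalIntegrable_iff.2 <| (integrableOn_const measure_Ioc_lt_top.ne).indicator measurableSet_Iic

lemma integral_indicator_Iic_const {a b c : ℝ} (d : ℝ) (hac : a ≤ c) (hcb : c ≤ b) :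
    ∫ t in a..b, {t | t ≤ c}.indicator (fun _ => d) t = (c - a) * d := by
  rw [intervalIntegral.integral_indicator ⟨hac, hcb⟩, intervalIntegral.integral_const, smul_eq_mul]

lemma sum_Icc_floor_div_eq_sum_indicator (f : ℕ → ℝ) {x t : ℝ} (hx : 0 ≤ x) (ht : 1 ≤ t) :
    ∑ n ∈ Icc 1 ⌊x / t⌋₊, f n = ∑ n ∈ Icc 1 ⌊x⌋₊, {s | s ≤ x / n}.indicator (fun _ => f n) t := by
  have ht0 : 0 < t := one_pos.trans_le ht
  simp only [Set.indicator_apply, Set.mem_ofPred_eq]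
  rw [← sum_filter]
  congr 1
  ext n
  simp only [mem_Icc, mem_filter]
  constructor
  · rintro ⟨hn1, hn⟩
    have hn0 : (0 : ℝ) < n := by exact_mod_cast hn1
    have hnt : (n : ℝ) ≤ x / t := (Nat.le_floor_iff (by positivity)).1 hn
    refine ⟨⟨hn1, Nat.le_floor (hnt.trans (div_le_self hx ht))⟩, ?_⟩
    rw [le_div_iff₀ hn0, mul_comm]
    exact (le_div_iff₀ ht0).1 hnt
  · rintro ⟨⟨hn1, -⟩, htn⟩
    have hn0 : (0 : ℝ) < n := by exact_mod_cast hn1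
    refine ⟨hn1, Nat.le_floor ?_⟩
    rw [le_div_iff₀ ht0, mul_comm]
    exact (le_div_iff₀ hn0).1 htn

theorem stmt_1 (x : ℝ) (hx : 1 ≤ x) :
    ∫ t in (1:ℝ)..x, Mf (x / t) = x * mf x - Mf x := by
  have hx0 : 0 ≤ x := zero_le_one.trans hx
  calc ∫ t in (1:ℝ)..x, Mf (x / t)
      = ∫ t in (1:ℝ)..x,
          ∑ n ∈ Icc 1 ⌊x⌋₊, {s | s ≤ x / n}.indicator (fun _ => (moebius n : ℝ)) t := by
        refine intervalIntegral.integral_congr fun t ht => ?_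
        exact sum_Icc_floor_div_eq_sum_indicator _ hx0 (Set.uIcc_of_le hx ▸ ht).1
    _ = ∑ n ∈ Icc 1 ⌊x⌋₊, (x / n - 1) * (moebius n : ℝ) := by
        rw [intervalIntegral.integral_finsetSum fun n _ => intervalIntegrable_indicator_Iic_const ..]
        refine sum_congr rfl fun n hn => ?_
        obtain ⟨hn1, hnx⟩ := mem_Icc.1 hn
        have hn1' : (1 : ℝ) ≤ n := by exact_mod_cast hn1
        exact integral_indicator_Iic_const _
          ((one_le_div (one_pos.trans_le hn1')).2 ((Nat.le_floor_iff hx0).1 hnx))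
          (div_le_self hx0 hn1')
    _ = x * mf x - Mf x := by
        simp only [mf, Mf, mul_sum, ← sum_sub_distrib]
        exact sum_congr rfl fun n _ => by ring
end

section
/- For every real x ≥ 1, ∫₁ˣ m(x/t)/t² dt = m(x) − M(x)/x, where M(u) = Σ_{n≤u} μ(n) and m(u) = Σ_{n≤u} μ(n)/n. -/
open Finset MeasureTheory ArithmeticFunction Real

/-!
Write `m(x/t) = ∑_{n ≤ x} (μ(n)/n) · 1[t ≤ x/n]` for `1 ≤ t ≤ x` and integrate term by term:
`∫₁^{x/n} dt/t² = 1 - n/x`, so the integral is `∑_{n ≤ x} μ(n)/n - ∑_{n ≤ x} μ(n)/x`.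
-/

theorem integral_inv_sq_from_one {c : ℝ} (hc : 0 < c) :
    ∫ t in (1 : ℝ)..c, (t ^ 2)⁻¹ = 1 - c⁻¹ := by
  have hzero : (0 : ℝ) ∉ Set.uIcc 1 c := fun h ↦ by
    rcases Set.mem_uIcc.mp h with h | h <;> linarith [h.1, h.2]
  have := integral_zpow (a := 1) (b := c) (n := -2) (Or.inr ⟨by decide, hzero⟩)
  simp only [zpow_neg, zpow_ofNat] at this
  rw [this]
  norm_num
  ring

theorem Icc_floor_div_eq_filter {x t : ℝ} (hx : 0 ≤ x) (ht : 1 ≤ t) :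
    Icc 1 ⌊x / t⌋₊ = (Icc 1 ⌊x⌋₊).filter (fun n : ℕ ↦ t ≤ x / n) := by
  have ht0 : 0 < t := one_pos.trans_le ht
  ext n
  simp only [mem_Icc, mem_filter]
  constructor
  · rintro ⟨hn, hnt⟩
    have hn0 : (0 : ℝ) < n := by exact_mod_cast hn
    have hle : (n : ℝ) ≤ x / t := (Nat.le_floor_iff (by positivity)).mp hnt
    refine ⟨⟨hn, Nat.le_floor (hle.trans (div_le_self hx ht))⟩, ?_⟩
    exact (le_div_comm₀ hn0 ht0).mp hle
  · rintro ⟨⟨hn, -⟩, htn⟩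
    have hn0 : (0 : ℝ) < n := by exact_mod_cast hn
    exact ⟨hn, Nat.le_floor ((le_div_comm₀ ht0 hn0).mp htn)⟩

theorem sum_Icc_floor_div_div_sq (a : ℕ → ℝ) {x t : ℝ} (hx : 0 ≤ x) (ht : 1 ≤ t) :
    (∑ n ∈ Icc 1 ⌊x / t⌋₊, a n) / t ^ 2 =
      ∑ n ∈ Icc 1 ⌊x⌋₊, {u : ℝ | u ≤ x / n}.indicator (fun u ↦ a n / u ^ 2) t := by
  rw [Icc_floor_div_eq_filter hx ht, sum_filter, sum_div]
  refine sum_congr rfl fun n _ ↦ ?_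
  simp only [Set.indicator_apply, Set.mem_ofPred_eq]
  split_ifs <;> simp

theorem intervalIntegrable_indicator_div_sq (b : ℝ) {c x : ℝ} (hx : 1 ≤ x) :
    IntervalIntegrable ({u : ℝ | u ≤ c}.indicator fun u ↦ b / u ^ 2) volume 1 x := by
  rw [intervalIntegrable_iff_integrableOn_Ioc_of_le hx]
  refine Integrable.indicator ?_ measurableSet_Iic
  have hcont : ContinuousOn (fun u : ℝ ↦ b / u ^ 2) (Set.Icc 1 x) :=
    continuousOn_const.div (continuousOn_id.pow 2) fun u hu ↦ by
      have : (0 : ℝ) < u := one_pos.trans_le hu.1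
      positivity
  exact hcont.integrableOn_Icc.mono_set Set.Ioc_subset_Icc_self

theorem integral_indicator_div_sq (b : ℝ) {c x : ℝ} (hc : c ∈ Set.Icc 1 x) :
    ∫ t in (1 : ℝ)..x, {u : ℝ | u ≤ c}.indicator (fun u ↦ b / u ^ 2) t = b * (1 - c⁻¹) := by
  rw [intervalIntegral.integral_indicator hc]
  simp_rw [div_eq_mul_inv b]
  rw [intervalIntegral.integral_const_mul, integral_inv_sq_from_one (one_pos.trans_le hc.1)]

theorem integral_summatory_div_sq (a : ℕ → ℝ) {x : ℝ} (hx : 1 ≤ x) :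
    ∫ t in (1 : ℝ)..x, (∑ n ∈ Icc 1 ⌊x / t⌋₊, a n) / t ^ 2 =
      ∑ n ∈ Icc 1 ⌊x⌋₊, a n * (1 - n / x) := by
  have hx0 : 0 < x := one_pos.trans_le hx
  rw [intervalIntegral.integral_congr fun t ht ↦
      sum_Icc_floor_div_div_sq a hx0.le (Set.uIcc_of_le hx ▸ ht).1,
    intervalIntegral.integral_finsetSum fun n _ ↦ intervalIntegrable_indicator_div_sq _ hx]
  refine sum_congr rfl fun n hn ↦ ?_
  obtain ⟨hn1, hnx⟩ := mem_Icc.mp hn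
  have hn0 : (0 : ℝ) < n := by exact_mod_cast hn1
  have hmem : x / n ∈ Set.Icc 1 x :=
    ⟨(one_le_div hn0).mpr ((Nat.le_floor_iff hx0.le).mp hnx),
      div_le_self hx0.le (by exact_mod_cast hn1)⟩
  rw [integral_indicator_div_sq _ hmem, inv_div]

theorem stmt_2 (x : ℝ) (hx : 1 ≤ x) :
    ∫ t in (1:ℝ)..x, mf (x / t) / t ^ 2 = mf x - Mf x / x := by
  have hx0 : x ≠ 0 := (one_pos.trans_le hx).ne'
  simp only [mf, Mf]
  rw [integral_summatory_div_sq _ hx, sum_div, ← sum_sub_distrib]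
  refine sum_congr rfl fun n hn ↦ ?_
  have hn0 : (n : ℝ) ≠ 0 := by have := (mem_Icc.mp hn).1; positivity
  field_simp
end

section
/- Let δ : [1,∞) → ℂ be locally integrable. Then for every real x ≥ 1, ∫₁ˣ M(x/t) δ(t) (dt/t) = ∫₁ˣ (Σ_{n≤u} μ(n) δ(u/n)) (du/u), where M(u) = Σ_{n≤u} μ(n). -/
/-!
Both sides equal `∑_{n ≤ x} μ(n) ∫₁^{x/n} δ(t) dt/t`. On the left, expand `M(x/t)` and
exchange sum and integral: the `n`-th term only lives on `t ≤ x/n`. On the right, exchange sum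
and integral (the `n`-th term lives on `u ≥ n`) and substitute `u = n t`.
-/

open Finset MeasureTheory ArithmeticFunction Real

theorem Finset.mem_Icc_one_floor {x : ℝ} {n : ℕ} :
    n ∈ Icc 1 ⌊x⌋₊ ↔ (n : ℝ) ∈ Set.Icc 1 x := by
  rw [mem_Icc, Set.mem_Icc, Nat.one_le_cast, and_congr_right_iff]
  exact fun hn ↦ Nat.le_floor_iff' (by omega)

theorem Finset.Icc_one_floor_eq_filter {y x : ℝ} (hyx : y ≤ x) :
    Icc 1 ⌊y⌋₊ = (Icc 1 ⌊x⌋₊).filter fun n : ℕ ↦ (n : ℝ) ≤ y := by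
  ext n
  simp only [mem_filter, mem_Icc_one_floor, Set.mem_Icc]
  exact ⟨fun h ↦ ⟨⟨h.1, h.2.trans hyx⟩, h.2⟩, fun h ↦ ⟨h.1.1, h.2⟩⟩

theorem div_natCast_mem_Icc_of_mem_Icc_floor {x : ℝ} {n : ℕ} (hn : n ∈ Icc 1 ⌊x⌋₊) :
    x / n ∈ Set.Icc 1 x := by
  obtain ⟨h1n, hnx⟩ := mem_Icc_one_floor.mp hn
  exact ⟨(one_le_div (by positivity)).mpr hnx, div_le_self (by linarith) h1n⟩

namespace intervalIntegral

variable {E : Type*} [NormedAddCommGroup E] {μ : Measure ℝ} [NullSingletonClass μ]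
  {f : ℝ → E} {a b c : ℝ}

theorem _root_.IntervalIntegrable.indicator_Ici (hf : IntervalIntegrable f μ c b) (hac : a ≤ c)
    (hcb : c ≤ b) : IntervalIntegrable ((Set.Ici c).indicator f) μ a b := by
  have hIoi : IntervalIntegrable ((Set.Ioi c).indicator f) μ a b := by
    rw [intervalIntegrable_iff_integrableOn_Ioc_of_le (hac.trans hcb), IntegrableOn,
      integrable_indicator_iff measurableSet_Ioi, IntegrableOn,
      Measure.restrict_restrict measurableSet_Ioi, Set.inter_comm, Set.Ioc_inter_Ioi,
      max_eq_right hac]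
    exact (intervalIntegrable_iff_integrableOn_Ioc_of_le hcb).mp hf
  exact hIoi.congr_ae ((indicator_ae_eq_of_ae_eq_set Ioi_ae_eq_Ici).filter_mono ae_restrict_le)

variable [NormedSpace ℝ E]

theorem integral_indicator_Ici (h : c ∈ Set.Icc a b) :
    ∫ x in a..b, (Set.Ici c).indicator f x ∂μ = ∫ x in c..b, f x ∂μ := by
  rw [integral_congr_ae ((indicator_ae_eq_of_ae_eq_set (Ioi_ae_eq_Ici (μ := μ))).symm.mono
      fun x hx _ ↦ hx), integral_of_le (h.1.trans h.2), integral_of_le h.2,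
    MeasureTheory.integral_indicator measurableSet_Ioi, Measure.restrict_restrict measurableSet_Ioi,
    Set.inter_comm, Set.Ioc_inter_Ioi, max_eq_right h.1]

end intervalIntegral

section

variable {E : Type*} [NormedAddCommGroup E] [NormedSpace ℝ E]
  {a : ℕ → ℝ} {G : ℝ → E} {x : ℝ}

theorem integral_sum_Icc_floor_div_smul (hG : IntervalIntegrable G volume 1 x) (hx : 1 ≤ x) :
    ∫ t in (1 : ℝ)..x, (∑ n ∈ Icc 1 ⌊x / t⌋₊, a n) • G t
      = ∑ n ∈ Icc 1 ⌊x⌋₊, a n • ∫ t in (1 : ℝ)..x / n, G t := by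
  have hsplit : Set.EqOn (fun t ↦ (∑ n ∈ Icc 1 ⌊x / t⌋₊, a n) • G t)
      (fun t ↦ ∑ n ∈ Icc 1 ⌊x⌋₊, {s | s ≤ x / n}.indicator (fun s ↦ a n • G s) t)
      (Set.uIcc 1 x) := by
    intro t ht
    rw [Set.uIcc_of_le hx] at ht
    have ht0 : 0 < t := one_pos.trans_le ht.1
    dsimp only
    rw [Icc_one_floor_eq_filter (div_le_self (by linarith) ht.1), sum_filter, sum_smul]
    refine sum_congr rfl fun n hn ↦ ?_
    have hn0 : (0 : ℝ) < n := by exact_mod_cast (mem_Icc.mp hn).1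
    simp only [Set.indicator_apply, Set.mem_ofPred_eq, le_div_comm₀ hn0 ht0, ite_smul,
      zero_smul]
  rw [intervalIntegral.integral_congr hsplit, intervalIntegral.integral_finsetSum]
  · refine sum_congr rfl fun n hn ↦ ?_
    rw [intervalIntegral.integral_indicator (div_natCast_mem_Icc_of_mem_Icc_floor hn),
      intervalIntegral.integral_smul]
  · intro n _
    rw [intervalIntegrable_iff] at hG ⊢
    exact (hG.smul (a n)).indicator measurableSet_Iic

theorem integral_sum_Icc_floor_smul_comp_div (hG : IntervalIntegrable G volume 1 x)
    (hx : 1 ≤ x) :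
    ∫ u in (1 : ℝ)..x, ∑ n ∈ Icc 1 ⌊u⌋₊, (a n / n) • G (u / n)
      = ∑ n ∈ Icc 1 ⌊x⌋₊, a n • ∫ t in (1 : ℝ)..x / n, G t := by
  have hsplit : Set.EqOn (fun u ↦ ∑ n ∈ Icc 1 ⌊u⌋₊, (a n / n) • G (u / n))
      (fun u ↦ ∑ n ∈ Icc 1 ⌊x⌋₊,
        (Set.Ici (n : ℝ)).indicator (fun v ↦ (a n / n) • G (v / n)) u)
      (Set.uIcc 1 x) := by
    intro u hu
    rw [Set.uIcc_of_le hx] at hu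
    simp only [Icc_one_floor_eq_filter hu.2, sum_filter, Set.indicator_apply, Set.mem_Ici]
  have hmem : ∀ n ∈ Icc 1 ⌊x⌋₊, (0 : ℝ) < n ∧ (n : ℝ) ∈ Set.Icc 1 x := fun n hn ↦
    ⟨one_pos.trans_le (mem_Icc_one_floor.mp hn).1, mem_Icc_one_floor.mp hn⟩
  rw [intervalIntegral.integral_congr hsplit, intervalIntegral.integral_finsetSum]
  · refine sum_congr rfl fun n hn ↦ ?_
    obtain ⟨hn0, hn⟩ := hmem n hn
    rw [intervalIntegral.integral_indicator_Ici hn, intervalIntegral.integral_smul,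
      intervalIntegral.integral_comp_div _ hn0.ne', div_self hn0.ne', smul_smul,
      div_mul_cancel₀ _ hn0.ne']
  · intro n hn
    obtain ⟨hn0, hnI⟩ := hmem n hn
    have hGn : IntervalIntegrable G volume 1 (x / n) :=
      hG.mono_set (Set.uIcc_subset_uIcc_left (by
        rw [Set.uIcc_of_le hx]; exact div_natCast_mem_Icc_of_mem_Icc_floor hn))
    have hGn' : IntervalIntegrable (fun v ↦ G (v / n)) volume n x := by
      simpa [div_eq_mul_inv, mul_assoc, hn0.ne'] using hGn.comp_mul_right (c := (n : ℝ)⁻¹)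
    exact (hGn'.smul (a n / n)).indicator_Ici hnI.1 hnI.2

end

theorem stmt_3 (δ : ℝ → ℂ) (hδ : LocallyIntegrableOn δ (Set.Ici 1))
    (x : ℝ) (hx : 1 ≤ x) :
    ∫ t in (1:ℝ)..x, (Mf (x / t) : ℂ) * δ t / t
      = ∫ u in (1:ℝ)..x, (∑ n ∈ Finset.Icc 1 ⌊u⌋₊, (moebius n : ℂ) * δ (u / n)) / u := by
  have hG : IntervalIntegrable (fun t ↦ δ t / t) volume 1 x := by
    have hinv : ContinuousOn (fun t : ℝ ↦ (t : ℂ)⁻¹) (Set.Icc 1 x) :=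
      (Complex.continuous_ofReal.continuousOn).inv₀ fun t ht ↦ by
        simpa using (one_pos.trans_le ht.1).ne'
    rw [intervalIntegrable_iff_integrableOn_Icc_of_le hx]
    simpa only [div_eq_mul_inv] using
      (hδ.integrableOn_compact_subset Set.Icc_subset_Ici_self isCompact_Icc).mul_continuousOn
        hinv isCompact_Icc
  calc ∫ t in (1:ℝ)..x, (Mf (x / t) : ℂ) * δ t / t
      = ∫ t in (1:ℝ)..x, (∑ n ∈ Icc 1 ⌊x / t⌋₊, (moebius n : ℝ)) • (δ t / t) := by
        simp only [Mf, Complex.real_smul, mul_div_assoc]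
    _ = ∫ u in (1:ℝ)..x,
          ∑ n ∈ Icc 1 ⌊u⌋₊, ((moebius n : ℝ) / n) • (δ (u / n) / (u / n : ℝ)) := by
        rw [integral_sum_Icc_floor_div_smul hG hx, integral_sum_Icc_floor_smul_comp_div hG hx]
    _ = _ := by
        refine intervalIntegral.integral_congr fun u hu ↦ ?_
        rw [Set.uIcc_of_le hx] at hu
        have hu0 : (u : ℂ) ≠ 0 := Complex.ofReal_ne_zero.mpr (one_pos.trans_le hu.1).ne'
        simp only [sum_div]
        refine sum_congr rfl fun n hn ↦ ?_
        have hn0 : (n : ℂ) ≠ 0 := Nat.cast_ne_zero.mpr (by have := (mem_Icc.mp hn).1; omega)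
        rw [Complex.real_smul]
        push_cast
        field_simp
end

section
/- Let δ : [1,∞) → ℂ be locally integrable and define δ₁(t) = Σ_{k≤t} δ(t/k). Then for every real x ≥ 1, ∫₁ˣ M(x/t) δ₁(t) (dt/t) = ∫₁ˣ δ(u) (du/u). -/
open Finset MeasureTheory ArithmeticFunction Real

/-!
Put `G y = ∫₁^y δ(u) du/u`. Since `δ₁(t)/t = Σ_k 1_{t ≥ k} δ(t/k)/t` and `dt/t` is invariant
under the dilation `t ↦ t/k`, one gets `∫₁^c δ₁(t) dt/t = Σ_{k ≤ c} G(c/k)`. Expanding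
`M(x/t) = Σ_{n ≤ x} μ(n) 1_{t ≤ x/n}` then turns the left-hand side into
`Σ_{n ≤ x} μ(n) Σ_{k ≤ x/n} G(x/(nk))`, which collapses to `G(x)` because
`Σ_{d ∣ m} μ(d) = [m = 1]`.
-/

section IntervalIndicator

variable {E : Type*} [NormedAddCommGroup E] {f : ℝ → E} {a b c : ℝ}

theorem intervalIntegral.integral_indicator_Ici_s4 [NormedSpace ℝ E] (hab : a ≤ b) (hbc : b ≤ c) :
    ∫ t in a..c, (Set.Ici b).indicator f t = ∫ t in b..c, f t := by
  rw [intervalIntegral.integral_of_le (hab.trans hbc), intervalIntegral.integral_of_le hbc,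
    setIntegral_indicator measurableSet_Ici,
    setIntegral_congr_set (Filter.EventuallyEq.rfl.inter Ioi_ae_eq_Ici.symm), Set.Ioc_inter_Ioi,
    sup_eq_right.2 hab]

theorem IntervalIntegrable.indicator_Ici_s4 (hf : IntervalIntegrable f volume b c)
    (hab : a ≤ b) (hbc : b ≤ c) :
    IntervalIntegrable ((Set.Ici b).indicator f) volume a c := by
  rw [intervalIntegrable_iff_integrableOn_Ioc_of_le (hab.trans hbc),
    integrableOn_indicator_iff measurableSet_Ici]
  rw [intervalIntegrable_iff_integrableOn_Ioc_of_le hbc, ← integrableOn_Icc_iff_integrableOn_Ioc]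
    at hf
  exact hf.mono_set fun t ht => ⟨ht.1, ht.2.2⟩

theorem IntervalIntegrable.indicator_Iic (hf : IntervalIntegrable f volume a b)
    (hab : a ≤ b) (hbc : b ≤ c) :
    IntervalIntegrable ({t | t ≤ b}.indicator f) volume a c := by
  rw [intervalIntegrable_iff_integrableOn_Ioc_of_le (hab.trans hbc)]
  change IntegrableOn ((Set.Iic b).indicator f) _ _
  rw [integrableOn_indicator_iff measurableSet_Iic, Set.Iic_inter_Ioc_of_le hbc]
  exact (intervalIntegrable_iff_integrableOn_Ioc_of_le hab).1 hf

end IntervalIndicator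

theorem intervalIntegral.integral_comp_div_div_self (f : ℝ → ℂ) {k : ℝ} (hk : k ≠ 0) (a b : ℝ) :
    ∫ t in a..b, f (t / k) / t = ∫ u in a / k..b / k, f u / u := by
  have hdil : (fun t => f (t / k) / t) = fun t => k⁻¹ • (fun u : ℝ => f u / u) (t / k) := by
    funext t
    rcases eq_or_ne t 0 with rfl | ht
    · simp
    · have : (k : ℂ) ≠ 0 := by exact_mod_cast hk
      simp only [Complex.real_smul]
      push_cast
      field_simp
  rw [hdil, intervalIntegral.integral_smul,
    intervalIntegral.integral_comp_div (fun u => f u / u) hk, smul_smul, inv_mul_cancel₀ hk,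
    one_smul]

theorem IntervalIntegrable.comp_div_div_self {f : ℝ → ℂ} {k a b : ℝ} (hk : k ≠ 0)
    (hf : IntervalIntegrable (fun u => f u / u) volume (a / k) (b / k)) :
    IntervalIntegrable (fun t => f (t / k) / t) volume a b := by
  have hdil : (fun t => f (t / k) / t) =
      fun t => (k⁻¹ : ℂ) * (f (t * k⁻¹) / (t * k⁻¹ : ℝ)) := by
    funext t
    rcases eq_or_ne t 0 with rfl | ht
    · simp
    · have : (k : ℂ) ≠ 0 := by exact_mod_cast hk
      push_cast
      field_simp
  rw [hdil]
  simpa [hk] using (hf.comp_mul_right (c := k⁻¹)).const_mul (k⁻¹ : ℂ)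

theorem MeasureTheory.LocallyIntegrableOn.intervalIntegrable_div_self {δ : ℝ → ℂ} {r a b : ℝ}
    (hδ : LocallyIntegrableOn δ (Set.Ici r)) (hr : 0 < r) (ha : r ≤ a) (hb : r ≤ b) :
    IntervalIntegrable (fun u => δ u / u) volume a b := by
  have hinv : ContinuousOn (fun u : ℝ => (u : ℂ)⁻¹) (Set.Ici r) :=
    Complex.continuous_ofReal.continuousOn.inv₀ fun u hu => by
      exact_mod_cast (hr.trans_le hu).ne'
  have hloc := hδ.mul_continuousOn hinv isClosed_Ici.isLocallyClosed
  refine (hloc.integrableOn_compact_subset ?_ isCompact_uIcc).intervalIntegrable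
  exact fun u hu => (le_min ha hb).trans hu.1

theorem Finset.sum_Icc_sum_Icc_div_eq_sum_divisorsAntidiagonal {M : Type*} [AddCommMonoid M]
    (N : ℕ) (F : ℕ → ℕ → M) :
    ∑ n ∈ Icc 1 N, ∑ k ∈ Icc 1 (N / n), F n k =
      ∑ m ∈ Icc 1 N, ∑ p ∈ m.divisorsAntidiagonal, F p.1 p.2 := by
  rw [sum_sigma', sum_sigma']
  refine sum_nbij' (fun p => ⟨p.1 * p.2, (p.1, p.2)⟩) (fun q => ⟨q.2.1, q.2.2⟩) ?_ ?_ ?_ ?_ ?_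
  · rintro ⟨n, k⟩ h
    simp only [mem_sigma, mem_Icc, Nat.mem_divisorsAntidiagonal] at h ⊢
    have hkn := (Nat.le_div_iff_mul_le (by omega)).1 h.2.2
    have hnk : n * k ≠ 0 := Nat.mul_ne_zero (by omega) (by omega)
    exact ⟨⟨Nat.one_le_iff_ne_zero.2 hnk, by linarith⟩, trivial, hnk⟩
  · rintro ⟨m, d, e⟩ h
    simp only [mem_sigma, mem_Icc, Nat.mem_divisorsAntidiagonal] at h ⊢
    obtain ⟨⟨hm1, hmN⟩, rfl, -⟩ := h
    have hd : 0 < d := Nat.pos_of_mul_pos_right hm1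
    have he : 0 < e := Nat.pos_of_mul_pos_left hm1
    exact ⟨⟨hd, by nlinarith⟩, he, (Nat.le_div_iff_mul_le hd).2 (by linarith)⟩
  · rintro ⟨n, k⟩ -
    rfl
  · rintro ⟨m, d, e⟩ h
    simp only [mem_sigma, Nat.mem_divisorsAntidiagonal] at h
    simp [h.2.1]
  · rintro ⟨n, k⟩ -
    rfl

theorem ArithmeticFunction.sum_Icc_moebius_mul_sum_Icc_div {R : Type*} [Ring R] {N : ℕ}
    (hN : 1 ≤ N) (G : ℕ → R) :
    ∑ n ∈ Icc 1 N, (moebius n : R) * ∑ k ∈ Icc 1 (N / n), G (n * k) = G 1 := by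
  have hdiv (m : ℕ) : ∑ p ∈ m.divisorsAntidiagonal, (moebius p.1 : R) * G (p.1 * p.2) =
      if m = 1 then G 1 else 0 := by
    have hμζ := coe_mul_zeta_apply (f := (moebius : ArithmeticFunction R)) (x := m)
    rw [coe_moebius_mul_coe_zeta, one_apply] at hμζ
    simp only [intCoe_apply] at hμζ
    rw [sum_congr rfl fun p hp => by rw [(Nat.mem_divisorsAntidiagonal.1 hp).1], ← sum_mul,
      Nat.sum_divisorsAntidiagonal (fun d _ => (moebius d : R)), ← hμζ]
    split_ifs with h <;> simp [h]
  simp_rw [mul_sum]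
  rw [sum_Icc_sum_Icc_div_eq_sum_divisorsAntidiagonal, sum_congr rfl fun m _ => hdiv m,
    sum_ite_eq', if_pos (mem_Icc.2 ⟨le_rfl, hN⟩)]

theorem Finset.sum_Icc_floor_eq_sum_ite {M : Type*} [AddCommMonoid M] (f : ℕ → M) {y z : ℝ}
    (hyz : y ≤ z) :
    ∑ n ∈ Icc 1 ⌊y⌋₊, f n = ∑ n ∈ Icc 1 ⌊z⌋₊, if (n : ℝ) ≤ y then f n else 0 := by
  rw [← sum_filter]
  congr 1
  ext n
  simp only [mem_filter, mem_Icc]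
  constructor
  · rintro ⟨hn, hny⟩
    have hny' := (Nat.le_floor_iff' (by omega)).1 hny
    exact ⟨⟨hn, Nat.le_floor (hny'.trans hyz)⟩, hny'⟩
  · rintro ⟨⟨hn, -⟩, hny⟩
    exact ⟨hn, Nat.le_floor hny⟩

theorem natCast_mem_Icc_of_mem_Icc_floor {c : ℝ} {k : ℕ} (hk : k ∈ Icc 1 ⌊c⌋₊) :
    (k : ℝ) ∈ Set.Icc 1 c := by
  obtain ⟨hk1, hkc⟩ := mem_Icc.1 hk
  exact ⟨by exact_mod_cast hk1, (Nat.le_floor_iff' (by omega)).1 hkc⟩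

theorem Mf_div_mul_eq_sum_indicator (F : ℝ → ℂ) {x t : ℝ} (hx : 0 ≤ x) (ht : 1 ≤ t) :
    (Mf (x / t) : ℂ) * F t =
      ∑ n ∈ Icc 1 ⌊x⌋₊, (moebius n : ℂ) * {s | s ≤ x / n}.indicator F t := by
  rw [Mf, sum_Icc_floor_eq_sum_ite _ (div_le_self hx ht)]
  push_cast
  rw [sum_mul]
  refine sum_congr rfl fun n hn => ?_
  have hn : (0 : ℝ) < n := by exact_mod_cast (mem_Icc.1 hn).1
  simp only [Set.indicator_apply, Set.mem_ofPred_eq, le_div_iff₀ (by linarith : (0 : ℝ) < t),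
    le_div_iff₀' hn]
  split_ifs <;> simp

theorem sum_floor_div_eq_sum_indicator (δ : ℝ → ℂ) {c t : ℝ} (htc : t ≤ c) :
    (∑ k ∈ Icc 1 ⌊t⌋₊, δ (t / k)) / t =
      ∑ k ∈ Icc 1 ⌊c⌋₊, (Set.Ici (k : ℝ)).indicator (fun s => δ (s / k) / s) t := by
  rw [sum_Icc_floor_eq_sum_ite _ htc, sum_div]
  refine sum_congr rfl fun k _ => ?_
  simp only [Set.indicator_apply, Set.mem_Ici]
  split_ifs <;> simp

theorem MeasureTheory.LocallyIntegrableOn.intervalIntegrable_indicator_comp_div {δ : ℝ → ℂ}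
    (hδ : LocallyIntegrableOn δ (Set.Ici 1)) {k c : ℝ} (hk : 1 ≤ k) (hkc : k ≤ c) :
    IntervalIntegrable ((Set.Ici k).indicator (fun s => δ (s / k) / s)) volume 1 c := by
  have hk0 : k ≠ 0 := by positivity
  refine (IntervalIntegrable.comp_div_div_self hk0 ?_).indicator_Ici_s4 hk hkc
  exact hδ.intervalIntegrable_div_self one_pos (by rw [div_self hk0])
    ((one_le_div (by positivity)).2 hkc)

theorem MeasureTheory.LocallyIntegrableOn.intervalIntegrable_sum_floor_div {δ : ℝ → ℂ}
    (hδ : LocallyIntegrableOn δ (Set.Ici 1)) {c : ℝ} (hc : 1 ≤ c) :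
    IntervalIntegrable (fun t => (∑ k ∈ Icc 1 ⌊t⌋₊, δ (t / k)) / t) volume 1 c := by
  refine (IntervalIntegrable.sum _ fun k hk => hδ.intervalIntegrable_indicator_comp_div
    (natCast_mem_Icc_of_mem_Icc_floor hk).1 (natCast_mem_Icc_of_mem_Icc_floor hk).2).congr
    fun t ht => ?_
  rw [Set.uIoc_of_le hc] at ht
  rw [sum_floor_div_eq_sum_indicator δ ht.2, Finset.sum_apply]

theorem MeasureTheory.LocallyIntegrableOn.integral_sum_floor_div {δ : ℝ → ℂ}
    (hδ : LocallyIntegrableOn δ (Set.Ici 1)) {c : ℝ} (hc : 1 ≤ c) :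
    ∫ t in (1 : ℝ)..c, (∑ k ∈ Icc 1 ⌊t⌋₊, δ (t / k)) / t =
      ∑ k ∈ Icc 1 ⌊c⌋₊, ∫ u in (1 : ℝ)..c / k, δ u / u := by
  have hk (k) (hmem : k ∈ Icc 1 ⌊c⌋₊) := natCast_mem_Icc_of_mem_Icc_floor hmem
  rw [intervalIntegral.integral_congr fun t ht =>
      sum_floor_div_eq_sum_indicator δ (Set.uIcc_of_le hc ▸ ht).2,
    intervalIntegral.integral_finsetSum fun k hk' =>
      hδ.intervalIntegrable_indicator_comp_div (hk k hk').1 (hk k hk').2]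
  refine sum_congr rfl fun k hk' => ?_
  have hk0 : (k : ℝ) ≠ 0 := by linarith [(hk k hk').1]
  rw [intervalIntegral.integral_indicator_Ici_s4 (hk k hk').1 (hk k hk').2,
    intervalIntegral.integral_comp_div_div_self _ hk0, div_self hk0]

theorem stmt_4 (δ : ℝ → ℂ) (hδ : LocallyIntegrableOn δ (Set.Ici 1))
    (δ₁ : ℝ → ℂ) (hδ₁ : ∀ t : ℝ, δ₁ t = ∑ k ∈ Finset.Icc 1 ⌊t⌋₊, δ (t / k))
    (x : ℝ) (hx : 1 ≤ x) :
    ∫ t in (1:ℝ)..x, (Mf (x / t) : ℂ) * δ₁ t / t = ∫ u in (1:ℝ)..x, δ u / u := by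
  obtain rfl : δ₁ = fun t => ∑ k ∈ Icc 1 ⌊t⌋₊, δ (t / k) := funext hδ₁
  have hxn (n : ℕ) (hn : n ∈ Icc 1 ⌊x⌋₊) : 1 ≤ x / n ∧ x / n ≤ x := by
    obtain ⟨hn1, hnx⟩ := natCast_mem_Icc_of_mem_Icc_floor hn
    exact ⟨(one_le_div (by positivity)).2 hnx, div_le_self (by positivity) hn1⟩
  calc ∫ t in (1:ℝ)..x, (Mf (x / t) : ℂ) * (∑ k ∈ Icc 1 ⌊t⌋₊, δ (t / k)) / t
      = ∫ t in (1:ℝ)..x, ∑ n ∈ Icc 1 ⌊x⌋₊, (moebius n : ℂ) *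
          {s | s ≤ x / n}.indicator (fun t => (∑ k ∈ Icc 1 ⌊t⌋₊, δ (t / k)) / t) t :=
        intervalIntegral.integral_congr fun t ht => by
          rw [mul_div_assoc]
          exact Mf_div_mul_eq_sum_indicator (fun t => _) (by linarith) (Set.uIcc_of_le hx ▸ ht).1
    _ = ∑ n ∈ Icc 1 ⌊x⌋₊, (moebius n : ℂ) *
          ∑ k ∈ Icc 1 (⌊x⌋₊ / n), ∫ u in (1:ℝ)..x / ↑(n * k), δ u / u := by
        rw [intervalIntegral.integral_finsetSum fun n hn =>
          ((hδ.intervalIntegrable_sum_floor_div (hxn n hn).1).indicator_Iic (hxn n hn).1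
            (hxn n hn).2).const_mul _]
        refine sum_congr rfl fun n hn => ?_
        rw [intervalIntegral.integral_const_mul, intervalIntegral.integral_indicator (hxn n hn),
          hδ.integral_sum_floor_div (hxn n hn).1, Nat.floor_div_natCast]
        simp only [Nat.cast_mul, div_div]
    _ = ∫ u in (1:ℝ)..x, δ u / u := by
        rw [sum_Icc_moebius_mul_sum_Icc_div (Nat.le_floor (by exact_mod_cast hx))
          (fun m => ∫ u in (1:ℝ)..x / m, δ u / u), Nat.cast_one, div_one]
end

section
/- Let F : [1,∞) → ℝ₊ be a nonnegative function, let T > 1 and j > 0 be real numbers. Then for every x ≥ T, (1/log^j x) ∫₁^{x/T} F(t) t^{−1} dt ≤ ∫₁^{x/T} F(t) t^{−1} / log^j(x/t) dt ≤ (1/log^j x) ∫₁^{x/T} F(t) t^{−1 + j/log T} dt. -/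
/-!
For `1 ≤ t ≤ x/T` we have `log T ≤ log (x/t) ≤ log x`, which gives the lower bound at once.
For the upper bound, `log x = log (x/t) + log t ≤ log (x/t) (1 + log t / log T)
≤ log (x/t) · t ^ (1 / log T)`, so `log^j x ≤ t ^ (j / log T) log^j (x/t)`.
Both bounds are then integrated against `F t / t ≥ 0`; the three integrands differ by continuous
positive factors, so they are integrable or not simultaneously and the non-integrable case is the
trivial `0 ≤ 0`.
-/

open MeasureTheory Real Set

theorem intervalIntegrable_mul_iff_of_continuousOn {f g : ℝ → ℝ} {a b : ℝ}
    {μ : Measure ℝ} (hg : ContinuousOn g (uIcc a b)) (hg0 : ∀ t ∈ uIcc a b, g t ≠ 0) :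
    IntervalIntegrable (fun t => f t * g t) μ a b ↔ IntervalIntegrable f μ a b := by
  refine ⟨fun h => ?_, fun h => h.mul_continuousOn hg⟩
  refine (h.mul_continuousOn (hg.inv₀ hg0)).congr fun t ht => ?_
  exact mul_inv_cancel_right₀ (hg0 t (uIoc_subset_uIcc ht)) (f t)

theorem integral_mul_le_integral_mul_of_le {φ u v : ℝ → ℝ} {a b : ℝ} {μ : Measure ℝ}
    (hab : a ≤ b) (hφ : ∀ t ∈ Icc a b, 0 ≤ φ t)
    (hu : ContinuousOn u (Icc a b)) (hv : ContinuousOn v (Icc a b))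
    (hu0 : ∀ t ∈ Icc a b, 0 < u t) (huv : ∀ t ∈ Icc a b, u t ≤ v t) :
    ∫ t in a..b, φ t * u t ∂μ ≤ ∫ t in a..b, φ t * v t ∂μ := by
  rw [← uIcc_of_le hab] at hφ hu hv hu0 huv
  have hv0 : ∀ t ∈ uIcc a b, 0 < v t := fun t ht => (hu0 t ht).trans_le (huv t ht)
  have hφu := intervalIntegrable_mul_iff_of_continuousOn (f := φ) (μ := μ) hu
    fun t ht => (hu0 t ht).ne'
  have hφv := intervalIntegrable_mul_iff_of_continuousOn (f := φ) (μ := μ) hv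
    fun t ht => (hv0 t ht).ne'
  by_cases hint : IntervalIntegrable φ μ a b
  · refine intervalIntegral.integral_mono_on hab (hφu.2 hint) (hφv.2 hint) fun t ht => ?_
    rw [← uIcc_of_le hab] at ht
    exact mul_le_mul_of_nonneg_left (huv t ht) (hφ t ht)
  · rw [intervalIntegral.integral_undef (mt hφu.1 hint),
      intervalIntegral.integral_undef (mt hφv.1 hint)]

theorem add_le_mul_exp_div {a L s : ℝ} (ha : 0 < a) (haL : a ≤ L) (hs : 0 ≤ s) :
    L + s ≤ L * exp (s / a) := by
  have hs_le : s ≤ L * (s / a) := by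
    rw [mul_div_assoc', le_div_iff₀ ha, mul_comm s a]
    exact mul_le_mul_of_nonneg_right haL hs
  calc L + s ≤ L * (s / a + 1) := by linarith
    _ ≤ L * exp (s / a) := mul_le_mul_of_nonneg_left (add_one_le_exp _) (ha.le.trans haL)

theorem log_mul_rpow_le_rpow_mul_log_rpow {T u t j : ℝ} (hT : 1 < T) (hu : T ≤ u) (ht : 1 ≤ t)
    (hj : 0 ≤ j) : log (u * t) ^ j ≤ t ^ (j / log T) * log u ^ j := by
  have hlT : 0 < log T := log_pos hT
  have hlu : log T ≤ log u := log_le_log (by linarith) hu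
  have hu0 : 0 < u := by linarith
  have ht0 : 0 < t := by linarith
  have hlog : log (u * t) ≤ log u * t ^ (log T)⁻¹ := by
    rw [log_mul hu0.ne' ht0.ne', rpow_def_of_pos ht0, ← div_eq_mul_inv]
    exact add_le_mul_exp_div hlT hlu (log_nonneg ht)
  calc log (u * t) ^ j ≤ (log u * t ^ (log T)⁻¹) ^ j :=
        rpow_le_rpow (log_nonneg (by nlinarith)) hlog hj
    _ = t ^ (j / log T) * log u ^ j := by
        rw [mul_rpow (hlT.le.trans hlu) (by positivity), ← rpow_mul ht0.le, inv_mul_eq_div,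
          mul_comm]

section

variable {T x t j : ℝ}

theorem le_div_and_div_le_of_mem_Icc (hT : 0 < T) (ht : t ∈ Icc 1 (x / T)) :
    T ≤ x / t ∧ x / t ≤ x := by
  have ht0 : 0 < t := by linarith [ht.1]
  have hx : 0 ≤ x := by nlinarith [ht.2, div_mul_cancel₀ x hT.ne', ht.1]
  refine ⟨?_, div_le_self hx ht.1⟩
  rw [le_div_iff₀ ht0, mul_comm, ← le_div_iff₀ hT]
  exact ht.2

theorem log_div_pos_of_mem_Icc (hT : 1 < T) (ht : t ∈ Icc 1 (x / T)) : 0 < log (x / t) :=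
  log_pos (hT.trans_le (le_div_and_div_le_of_mem_Icc (by linarith) ht).1)

theorem inv_log_rpow_le_inv_log_div_rpow (hT : 1 < T) (hj : 0 ≤ j) (ht : t ∈ Icc 1 (x / T)) :
    (log x ^ j)⁻¹ ≤ (log (x / t) ^ j)⁻¹ := by
  obtain ⟨hTle, hle⟩ := le_div_and_div_le_of_mem_Icc (by linarith) ht
  have hpos := log_div_pos_of_mem_Icc hT ht
  exact inv_anti₀ (rpow_pos_of_pos hpos j)
    (rpow_le_rpow hpos.le (log_le_log (by linarith) hle) hj)

theorem inv_log_div_rpow_le_rpow_div_log_rpow (hT : 1 < T) (hj : 0 ≤ j)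
    (ht : t ∈ Icc 1 (x / T)) : (log (x / t) ^ j)⁻¹ ≤ t ^ (j / log T) / log x ^ j := by
  obtain ⟨hTle, hle⟩ := le_div_and_div_le_of_mem_Icc (by linarith) ht
  have key := log_mul_rpow_le_rpow_mul_log_rpow hT hTle ht.1 hj
  rw [div_mul_cancel₀ x (zero_lt_one.trans_le ht.1).ne'] at key
  have hlx : 0 < log x := log_pos (by linarith)
  rw [le_div_iff₀ (rpow_pos_of_pos hlx j),
    inv_mul_le_iff₀ (rpow_pos_of_pos (log_div_pos_of_mem_Icc hT ht) j), mul_comm]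
  exact key

theorem continuousOn_inv_log_div_rpow (hT : 1 < T) :
    ContinuousOn (fun t => (log (x / t) ^ j)⁻¹) (Icc 1 (x / T)) := by
  have hdiv : ContinuousOn (fun t => x / t) (Icc 1 (x / T)) :=
    continuousOn_const.div continuousOn_id fun t ht => (zero_lt_one.trans_le ht.1).ne'
  have hlog : ContinuousOn (fun t => log (x / t)) (Icc 1 (x / T)) :=
    hdiv.log fun t ht => (zero_lt_one.trans (hT.trans_le
      (le_div_and_div_le_of_mem_Icc (by linarith) ht).1)).ne'
  exact (hlog.rpow_const fun t ht => Or.inl (log_div_pos_of_mem_Icc hT ht).ne').inv₀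
    fun t ht => (rpow_pos_of_pos (log_div_pos_of_mem_Icc hT ht) j).ne'

end

theorem stmt_9 (F : ℝ → ℝ) (hF : ∀ t, 1 ≤ t → 0 ≤ F t)
    (T j : ℝ) (hT : 1 < T) (hj : 0 < j) (x : ℝ) (hx : T ≤ x) :
    (1 / Real.log x ^ j) * (∫ t in (1:ℝ)..(x/T), F t * t⁻¹)
      ≤ ∫ t in (1:ℝ)..(x/T), F t * t⁻¹ / Real.log (x / t) ^ j ∧
    (∫ t in (1:ℝ)..(x/T), F t * t⁻¹ / Real.log (x / t) ^ j)
      ≤ (1 / Real.log x ^ j) * ∫ t in (1:ℝ)..(x/T), F t * t ^ (-1 + j / Real.log T) := by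
  have hb : 1 ≤ x / T := (one_le_div (by linarith)).2 hx
  have hφ : ∀ t ∈ Icc 1 (x / T), 0 ≤ F t * t⁻¹ :=
    fun t ht => mul_nonneg (hF t ht.1) (inv_nonneg.2 (by linarith [ht.1]))
  have hw := continuousOn_inv_log_div_rpow (x := x) (j := j) hT
  have hw0 : ∀ t ∈ Icc 1 (x / T), 0 < (log (x / t) ^ j)⁻¹ :=
    fun t ht => inv_pos.2 (rpow_pos_of_pos (log_div_pos_of_mem_Icc hT ht) j)
  have hpow : ContinuousOn (fun t : ℝ => t ^ (j / log T) / log x ^ j) (Icc 1 (x / T)) :=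
    (continuousOn_id.rpow_const fun _ _ => Or.inr (div_pos hj (log_pos hT)).le).div_const _
  simp only [one_div, div_eq_mul_inv (F _ * _)]
  constructor
  · calc (log x ^ j)⁻¹ * ∫ t in (1:ℝ)..(x/T), F t * t⁻¹
        = ∫ t in (1:ℝ)..(x/T), F t * t⁻¹ * (log x ^ j)⁻¹ := by
          rw [intervalIntegral.integral_mul_const, mul_comm]
      _ ≤ ∫ t in (1:ℝ)..(x/T), F t * t⁻¹ * (log (x / t) ^ j)⁻¹ :=
          integral_mul_le_integral_mul_of_le hb hφ continuousOn_const hw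
            (fun _ _ => inv_pos.2 (rpow_pos_of_pos (log_pos (hT.trans_le hx)) j))
            fun _ => inv_log_rpow_le_inv_log_div_rpow hT hj.le
  · calc ∫ t in (1:ℝ)..(x/T), F t * t⁻¹ * (log (x / t) ^ j)⁻¹
        ≤ ∫ t in (1:ℝ)..(x/T), F t * t⁻¹ * (t ^ (j / log T) / log x ^ j) :=
          integral_mul_le_integral_mul_of_le hb hφ hw hpow hw0
            fun _ => inv_log_div_rpow_le_rpow_div_log_rpow hT hj.le
      _ = (log x ^ j)⁻¹ * ∫ t in (1:ℝ)..(x/T), F t * t ^ (-1 + j / log T) := by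
          rw [← intervalIntegral.integral_const_mul]
          refine intervalIntegral.integral_congr fun t ht => ?_
          rw [uIcc_of_le hb] at ht
          rw [rpow_add (zero_lt_one.trans_le ht.1), rpow_neg_one]
          ring
end

section
/- Let g₁(y) = 4y(1−y²) and G₁(t) = 1 − (1/t) Σ_{n≤t} g₁(n/t) for t ≥ 1. Then ∫₁^∞ G₁(t) t^{−1} dt = 3/4 − γ, where γ is the Euler–Mascheroni constant. -/
open Finset MeasureTheory Real

noncomputable def g₁ (y : ℝ) : ℝ := 4 * y * (1 - y ^ 2)

noncomputable def G₁ (t : ℝ) : ℝ := 1 - (1 / t) * ∑ n ∈ Finset.Icc 1 ⌊t⌋₊, g₁ (n / t)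

/-!
With `N = ⌊t⌋` and `a = N(N+1)`, Faulhaber's formulas for `∑ n` and `∑ n³` turn `G₁` into
`(1 - a/t²)²`, whose quotient by `t` has the elementary antiderivative
`log t + a/t² - a²/(4t⁴)` on `[N, N+1)`. Summing over `1 ≤ N ≤ M` telescopes to
`3/4 - (H_M - log (M+1)) + O(1/M)`, which tends to `3/4 - γ`.
-/

open Filter Topology

lemma sum_Icc_natCast (N : ℕ) : ∑ n ∈ Icc 1 N, (n : ℝ) = N * (N + 1) / 2 := by
  induction N with
  | zero => simp
  | succ M ih =>
    rw [sum_Icc_succ_top (by omega), ih]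
    push_cast
    ring

lemma sum_Icc_natCast_pow_three (N : ℕ) :
    ∑ n ∈ Icc 1 N, (n : ℝ) ^ 3 = (N * (N + 1) / 2) ^ 2 := by
  induction N with
  | zero => simp
  | succ M ih =>
    rw [sum_Icc_succ_top (by omega), ih]
    push_cast
    ring

lemma G₁_eq_sq {t : ℝ} (ht : t ≠ 0) : G₁ t = (1 - ⌊t⌋₊ * (⌊t⌋₊ + 1) / t ^ 2) ^ 2 := by
  have hsum : ∑ n ∈ Icc 1 ⌊t⌋₊, g₁ (n / t)
      = 4 / t * ∑ n ∈ Icc 1 ⌊t⌋₊, (n : ℝ) - 4 / t ^ 3 * ∑ n ∈ Icc 1 ⌊t⌋₊, (n : ℝ) ^ 3 := by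
    rw [mul_sum, mul_sum, ← sum_sub_distrib]
    refine sum_congr rfl fun n _ => ?_
    unfold g₁
    field_simp
  rw [G₁, hsum, sum_Icc_natCast, sum_Icc_natCast_pow_three]
  field_simp
  ring

lemma abs_sq_sub_floor_mul_floor_add_one_le {t : ℝ} (ht : 0 ≤ t) :
    |t ^ 2 - ⌊t⌋₊ * (⌊t⌋₊ + 1)| ≤ t := by
  have hNt : (⌊t⌋₊ : ℝ) ≤ t := Nat.floor_le ht
  have htN : t < ⌊t⌋₊ + 1 := Nat.lt_floor_add_one t
  rw [abs_le]
  constructor <;> nlinarith [(Nat.cast_nonneg ⌊t⌋₊ : (0 : ℝ) ≤ ⌊t⌋₊)]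

lemma G₁_le {t : ℝ} (ht : 0 < t) : G₁ t ≤ 1 / t ^ 2 := by
  have hbound := abs_sq_sub_floor_mul_floor_add_one_le ht.le
  calc G₁ t = (t ^ 2 - ⌊t⌋₊ * (⌊t⌋₊ + 1)) ^ 2 / (t ^ 2) ^ 2 := by
        rw [G₁_eq_sq ht.ne']
        field_simp
    _ ≤ t ^ 2 / (t ^ 2) ^ 2 := by
        refine div_le_div_of_nonneg_right ?_ (by positivity)
        rw [← sq_abs]
        exact pow_le_pow_left₀ (abs_nonneg _) hbound 2
    _ = 1 / t ^ 2 := by field_simp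

lemma integrableOn_G₁_div_self : IntegrableOn (fun t => G₁ t / t) (Set.Ioi 1) := by
  have hmeas : AEStronglyMeasurable (fun t => G₁ t / t) (volume.restrict (Set.Ioi 1)) := by
    have hclosed : Measurable fun t : ℝ => (1 - ⌊t⌋₊ * (⌊t⌋₊ + 1) / t ^ 2) ^ 2 / t := by
      fun_prop
    refine hclosed.aestronglyMeasurable.congr ?_
    filter_upwards [self_mem_ae_restrict measurableSet_Ioi] with t ht
    rw [G₁_eq_sq (zero_lt_one.trans ht).ne']
  refine (integrableOn_Ioi_rpow_of_lt (by norm_num : (-3 : ℝ) < -1) one_pos).mono' hmeas ?_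
  filter_upwards [self_mem_ae_restrict measurableSet_Ioi] with t ht
  have ht0 : 0 < t := zero_lt_one.trans ht
  have hG : 0 ≤ G₁ t := by rw [G₁_eq_sq ht0.ne']; positivity
  calc ‖G₁ t / t‖ = G₁ t / t := by rw [norm_of_nonneg (by positivity)]
    _ ≤ 1 / t ^ 2 / t := by gcongr; exact G₁_le ht0
    _ = t ^ (-3 : ℝ) := by
        rw [rpow_neg ht0.le, show (3 : ℝ) = (3 : ℕ) by norm_num, rpow_natCast]
        ring

lemma hasDerivAt_log_add_div_sq_sub (a : ℝ) {t : ℝ} (ht : t ≠ 0) :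
    HasDerivAt (fun t => log t + a / t ^ 2 - a ^ 2 / (4 * t ^ 4)) ((1 - a / t ^ 2) ^ 2 / t) t := by
  have h := ((hasDerivAt_log ht).add
    ((hasDerivAt_const t a).div (hasDerivAt_pow 2 t) (pow_ne_zero 2 ht))).sub
    ((hasDerivAt_const t (a ^ 2)).div ((hasDerivAt_pow 4 t).const_mul 4) (by positivity))
  refine h.congr_deriv ?_
  field_simp
  ring

lemma integral_G₁_div_self_nat_succ {N : ℕ} (hN : 1 ≤ N) :
    ∫ t in (N : ℝ)..(N + 1), G₁ t / t
      = (log (N + 1) + N / (N + 1) - N ^ 2 / (4 * (N + 1) ^ 2))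
        - (log N + (N + 1) / N - (N + 1) ^ 2 / (4 * N ^ 2)) := by
  have hN0 : (0 : ℝ) < N := by exact_mod_cast hN
  have hle : (N : ℝ) ≤ N + 1 := by linarith
  set a : ℝ := N * (N + 1)
  have hpos : ∀ t ∈ Set.uIcc (N : ℝ) (N + 1), t ≠ 0 := fun t ht =>
    (hN0.trans_le (Set.uIcc_of_le hle ▸ ht).1).ne'
  -- on `(N, N + 1)` the floor of `t` is `N`; the endpoint `N + 1` is a null set
  have hcongr : ∫ t in (N : ℝ)..(N + 1), G₁ t / t
      = ∫ t in (N : ℝ)..(N + 1), (1 - a / t ^ 2) ^ 2 / t := by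
    refine intervalIntegral.integral_congr_ae ?_
    filter_upwards [Measure.ae_ne volume ((N : ℝ) + 1)] with t htne htmem
    rw [Set.uIoc_of_le hle] at htmem
    have hfloor : ⌊t⌋₊ = N := by
      rw [Nat.floor_eq_iff (by linarith [htmem.1])]
      exact ⟨htmem.1.le, lt_of_le_of_ne htmem.2 htne⟩
    rw [G₁_eq_sq (by linarith [htmem.1]), hfloor]
  have hcont : ContinuousOn (fun t => (1 - a / t ^ 2) ^ 2 / t) (Set.uIcc (N : ℝ) (N + 1)) :=
    ((continuousOn_const.sub (continuousOn_const.div (continuous_pow 2).continuousOn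
      fun t ht => pow_ne_zero 2 (hpos t ht))).pow 2).div continuousOn_id hpos
  rw [hcongr, intervalIntegral.integral_eq_sub_of_hasDerivAt
    (fun t ht => hasDerivAt_log_add_div_sq_sub a (hpos t ht)) hcont.intervalIntegrable]
  field_simp
  ring

lemma integral_G₁_div_self_one_nat_succ (M : ℕ) :
    ∫ t in (1 : ℝ)..(M + 1), G₁ t / t
      = 3 / 4 - (harmonic M - log (M + 1)) - 1 / (2 * (M + 1)) - 1 / (4 * (M + 1) ^ 2) := by
  induction M with
  | zero => norm_num
  | succ M ih =>
    have hint : ∀ x y : ℝ, 1 ≤ x → x ≤ y → IntervalIntegrable (fun t => G₁ t / t) volume x y :=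
      fun x y hx hxy => (intervalIntegrable_iff_integrableOn_Ioc_of_le hxy).2 <|
        integrableOn_G₁_div_self.mono_set fun t ht => hx.trans_lt ht.1
    have hM : (1 : ℝ) ≤ M + 1 := le_add_of_nonneg_left M.cast_nonneg
    rw [← intervalIntegral.integral_add_adjacent_intervals (b := (M : ℝ) + 1)
      (hint _ _ le_rfl hM) (hint _ _ hM (by push_cast; linarith)), ih]
    have hstep := integral_G₁_div_self_nat_succ (N := M + 1) (by omega)
    push_cast at hstep ⊢
    rw [hstep, harmonic_succ]
    push_cast
    field_simp
    ring

theorem stmt_10 :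
    ∫ t in Set.Ici (1:ℝ), G₁ t / t = 3 / 4 - Real.eulerMascheroniConstant := by
  have hseq : Tendsto (fun M : ℕ => (M : ℝ) + 1) atTop atTop :=
    tendsto_atTop_add_const_right _ 1 tendsto_natCast_atTop_atTop
  have hpartial := intervalIntegral_tendsto_integral_Ioi 1 integrableOn_G₁_div_self hseq
  have hinv := tendsto_one_div_add_atTop_nhds_zero_nat (𝕜 := ℝ)
  have hlimit : Tendsto (fun M : ℕ => 3 / 4 - (harmonic M - log (M + 1))
      - 1 / (2 * (M + 1)) - 1 / (4 * (M + 1) ^ 2)) atTop (𝓝 (3 / 4 - eulerMascheroniConstant)) := by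
    have h := (((tendsto_const_nhds (x := (3 / 4 : ℝ))).sub tendsto_harmonic_sub_log_add_one).sub
      (hinv.const_mul (1 / 2))).sub ((hinv.pow 2).const_mul (1 / 4))
    simp only [mul_zero, sub_zero, zero_pow two_ne_zero] at h
    refine h.congr fun M => ?_
    field_simp
  rw [integral_Ici_eq_integral_Ioi]
  exact tendsto_nhds_unique (hpartial.congr integral_G₁_div_self_one_nat_succ) hlimit
end
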